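/- For every integer $n \ge 4$, the number of magic quad squares over the EvenQuads-$2^n$ deck equals $2^n(2^n-1)(2^n-2)(2^n-4)(2^n-8) \cdot \big(10 + 85(2^n - 16) + 43(2^n - 16)(2^n - 32) + (2^n - 16)(2^n - 32)(2^n - 64)\big)$, the expression being evaluated in $\mathbb{Z}$. -/

import Mathlib

/-- A card in the EvenQuads-`2^n` deck, modeled as a vector in `(ℤ/2)^n`. -/
abbrev Deck (n : ℕ) := Fin n → ZMod 2

/-- Identification of the integer `k` (via binary representation) with a card. -/
def numToCard (n k : ℕ) : Deck n := fun i => if Nat.testBit k i.val then 1 else 0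

/-- A quad square is semimagic if every row and every column sums to zero. -/
def IsSemimagic {n : ℕ} (M : Fin 4 × Fin 4 → Deck n) : Prop :=
  (∀ i : Fin 4, ∑ j : Fin 4, M (i, j) = 0) ∧ (∀ j : Fin 4, ∑ i : Fin 4, M (i, j) = 0)

/-- A quad square is magic if it is semimagic and both diagonals sum to zero. -/
def IsMagic {n : ℕ} (M : Fin 4 × Fin 4 → Deck n) : Prop :=
  IsSemimagic M ∧ (∑ i : Fin 4, M (i, i) = 0) ∧ (∑ i : Fin 4, M (i, 3 - i) = 0)

/-- Identification of `Fin 4` with `(ℤ/2)^2` via binary representation. -/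
def finToVec (a : Fin 4) : Fin 2 → ZMod 2 := fun i => if Nat.testBit a.val i.val then 1 else 0

/-- A grid position as an element of `(ℤ/2)^2 × (ℤ/2)^2 ≅ (ℤ/2)^4`. -/
def posVec (p : Fin 4 × Fin 4) : (Fin 2 → ZMod 2) × (Fin 2 → ZMod 2) :=
  (finToVec p.1, finToVec p.2)

/-- A quad square is strongly magic if any four pairwise distinct positions summing to
zero in `(ℤ/2)^4` carry cards summing to zero. -/
def IsStronglyMagic {n : ℕ} (M : Fin 4 × Fin 4 → Deck n) : Prop :=
  ∀ p1 p2 p3 p4 : Fin 4 × Fin 4,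
    p1 ≠ p2 → p1 ≠ p3 → p1 ≠ p4 → p2 ≠ p3 → p2 ≠ p4 → p3 ≠ p4 →
    posVec p1 + posVec p2 + posVec p3 + posVec p4 = 0 →
    M p1 + M p2 + M p3 + M p4 = 0

/-- A quad square is of type C if its first row is `0,1,2,3` and
its first column is `0,4,8,12`. -/
def IsTypeC {n : ℕ} (M : Fin 4 × Fin 4 → Deck n) : Prop :=
  (∀ j : Fin 4, M (0, j) = numToCard n j.val) ∧
  (∀ i : Fin 4, M (i, 0) = numToCard n (4 * i.val))

/-!
Over `𝔽₂` the line conditions are linear, and a magic square is already determined by its corner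
and seven further cells. Hence every magic square over the deck `𝔽₂ⁿ` is `p ↦ c + f (g p)` for a
unique card `c` and linear map `f : 𝔽₂⁷ → 𝔽₂ⁿ`, where `g` is one fixed magic square of the
128-card deck, and the square is injective iff `ker f` contains none of the differences
`g p - g q`. Sorting the maps `f` by their kernel `K`, those with kernel `K` correspond to the
injective linear maps `𝔽₂⁷ ⧸ K → 𝔽₂ⁿ`, of which there are `∏_{i < 7 - dim K} (2ⁿ - 2ⁱ)`.
The subspaces avoiding the differences have dimension at most 3, because their 16 translates
`g p + K` are disjoint, and a machine count of their ordered bases shows that there are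
1, 43, 85 and 10 of them in dimensions 0, 1, 2 and 3.
-/

open Finset

section FiniteField

open Module Submodule

variable {F U V : Type*} [Field F] [Fintype F] [AddCommGroup U] [Module F U] [Finite U]
  [AddCommGroup V] [Module F V] [Finite V]

local notation "q" => Fintype.card F

theorem card_linearIndependent_eq_prod_range (k : ℕ) :
    Nat.card {s : Fin k → V // LinearIndependent F s} =
      ∏ i ∈ range k, (q ^ finrank F V - q ^ i) := by
  rcases le_or_gt k (finrank F V) with hk | hk
  · rw [card_linearIndependent hk, Fin.prod_univ_eq_prod_range (fun i => q ^ finrank F V - q ^ i)]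
  · have : IsEmpty {s : Fin k → V // LinearIndependent F s} :=
      ⟨fun s => by simpa using s.2.fintype_card_le_finrank.trans_lt hk⟩
    rw [Nat.card_of_isEmpty, prod_eq_zero (mem_range.mpr hk) (Nat.sub_self (q ^ finrank F V))]

theorem card_linearMap_ker_eq_bot :
    Nat.card {g : U →ₗ[F] V // LinearMap.ker g = ⊥} =
      ∏ i ∈ range (finrank F U), (q ^ finrank F V - q ^ i) := by
  let b := finBasis F U
  rw [← card_linearIndependent_eq_prod_range]
  exact Nat.card_congr
    { toFun := fun g => ⟨g.1 ∘ b, b.linearIndependent.map' g.1 g.2⟩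
      invFun := fun s => ⟨b.constr F s.1,
        LinearMap.ker_eq_bot.mpr (b.injective_constr_of_linearIndependent s.2)⟩
      left_inv := fun g => Subtype.ext (b.ext fun i => b.constr_basis F _ i)
      right_inv := fun s => Subtype.ext (funext fun i => b.constr_basis F _ i) }

theorem card_linearMap_ker_eq (K : Submodule F U) :
    Nat.card {f : U →ₗ[F] V // LinearMap.ker f = K} =
      ∏ i ∈ range (finrank F U - finrank F K), (q ^ finrank F V - q ^ i) := by
  have : Finite (U ⧸ K) := Finite.of_surjective _ K.mkQ_surjective
  rw [← K.finrank_quotient, ← card_linearMap_ker_eq_bot]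
  exact Nat.card_congr
    { toFun := fun f => ⟨K.liftQ f.1 f.2.ge, K.ker_liftQ_eq_bot _ _ f.2.le⟩
      invFun := fun g => ⟨g.1 ∘ₗ K.mkQ, by rw [LinearMap.ker_comp, g.2, comap_bot, ker_mkQ]⟩
      left_inv := fun f => Subtype.ext (K.liftQ_mkQ _ _)
      right_inv := fun g => Subtype.ext (K.linearMap_qext (K.liftQ_mkQ _ _)) }

theorem card_linearIndependent_span_eq {j : ℕ} (K : Submodule F U) (hK : finrank F K = j) :
    Nat.card {w : Fin j → U // LinearIndependent F w ∧ span F (Set.range w) = K} =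
      ∏ i ∈ range j, (q ^ j - q ^ i) := by
  rw [show q ^ j = q ^ finrank F K by rw [hK], ← card_linearIndependent_eq_prod_range]
  refine Nat.card_congr
    { toFun := fun w => ⟨fun i => ⟨w.1 i, w.2.2.le (subset_span ⟨i, rfl⟩)⟩,
        LinearIndependent.of_comp K.subtype w.2.1⟩
      invFun := fun s => ⟨K.subtype ∘ s.1, s.2.map' _ K.ker_subtype, ?_⟩
      left_inv := fun w => rfl
      right_inv := fun s => rfl }
  have hs : span F (Set.range s.1) = ⊤ := eq_top_of_finrank_eq <| by
    rw [finrank_span_eq_card s.2, Fintype.card_fin, hK]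
  rw [Set.range_comp, ← map_span, hs, map_subtype_top]

theorem card_linearIndependent_pred_span (P : Submodule F U → Prop) (j : ℕ) :
    Nat.card {w : Fin j → U // LinearIndependent F w ∧ P (span F (Set.range w))} =
      Nat.card {K : Submodule F U // finrank F K = j ∧ P K} * ∏ i ∈ range j, (q ^ j - q ^ i) := by
  have e : {w : Fin j → U // LinearIndependent F w ∧ P (span F (Set.range w))} ≃
      Σ K : {K : Submodule F U // finrank F K = j ∧ P K},
        {w : Fin j → U // LinearIndependent F w ∧ span F (Set.range w) = K} :=
    { toFun := fun w => ⟨⟨_, by rw [finrank_span_eq_card w.2.1, Fintype.card_fin], w.2.2⟩,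
        ⟨w.1, w.2.1, rfl⟩⟩
      invFun := fun w => ⟨w.2.1, w.2.2.1, by rw [w.2.2.2]; exact w.1.2.2⟩
      left_inv := fun w => rfl
      right_inv := fun ⟨K, w⟩ => Sigma.subtype_ext (Subtype.ext w.2.2) rfl }
  let _ := Fintype.ofFinite {K : Submodule F U // finrank F K = j ∧ P K}
  rw [Nat.card_congr e, Nat.card_sigma,
    sum_const_nat fun K _ => card_linearIndependent_span_eq K.1 K.2.1, card_univ,
    Nat.card_eq_fintype_card]

theorem card_linearMap_pred_ker (P : Submodule F U → Prop) :
    Nat.card {f : U →ₗ[F] V // P (LinearMap.ker f)} =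
      ∑ j ∈ range (finrank F U + 1), Nat.card {K : Submodule F U // finrank F K = j ∧ P K} *
        ∏ i ∈ range (finrank F U - j), (q ^ finrank F V - q ^ i) := by
  have : Finite (U →ₗ[F] V) := Finite.of_injective _ DFunLike.coe_injective
  have e : {f : U →ₗ[F] V // P (LinearMap.ker f)} ≃
      Σ j : Fin (finrank F U + 1), Σ K : {K : Submodule F U // finrank F K = j ∧ P K},
        {f : U →ₗ[F] V // LinearMap.ker f = K} :=
    { toFun := fun f => ⟨⟨_, Nat.lt_succ_of_le (finrank_le _)⟩, ⟨_, rfl, f.2⟩, ⟨f.1, rfl⟩⟩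
      invFun := fun f => ⟨f.2.2.1, by rw [f.2.2.2]; exact f.2.1.2.2⟩
      left_inv := fun f => rfl
      right_inv := by
        rintro ⟨⟨j, hj⟩, ⟨K, hK, hP⟩, ⟨f, hf⟩⟩
        cases hf
        cases hK
        rfl }
  let _ := fun j => Fintype.ofFinite {K : Submodule F U // finrank F K = j ∧ P K}
  rw [Nat.card_congr e, Nat.card_sigma,
    ← Fin.sum_univ_eq_sum_range (fun j => Nat.card {K : Submodule F U // finrank F K = j ∧ P K} *
        ∏ i ∈ range (finrank F U - j), (q ^ finrank F V - q ^ i))]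
  refine sum_congr rfl fun j _ => ?_
  rw [Nat.card_sigma, sum_const_nat fun K _ => by rw [card_linearMap_ker_eq, K.2.1], card_univ,
    Nat.card_eq_fintype_card]

end FiniteField

theorem linearIndependent_and_notMem_span_iff {R V ι : Type*} [Ring R] [AddCommGroup V]
    [Module R V] [Fintype ι] {S : Finset V} (hS : 0 ∉ S) (w : ι → V) :
    (LinearIndependent R w ∧ ∀ d ∈ S, d ∉ Submodule.span R (Set.range w)) ↔
      ∀ c : ι → R, c ≠ 0 → ∑ i, c i • w i ≠ 0 ∧ ∑ i, c i • w i ∉ S := by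
  refine ⟨fun ⟨hli, hspan⟩ c hc => ⟨fun h => hc (funext (Fintype.linearIndependent_iff.mp hli c h)),
    fun hmem => hspan _ hmem ((Submodule.mem_span_range_iff_exists_fun R).mpr ⟨c, rfl⟩)⟩,
    fun h => ⟨Fintype.linearIndependent_iff.mpr fun c hc i => ?_, fun d hd hspan => ?_⟩⟩
  · by_contra hci
    exact (h c fun h0 => hci (congrFun h0 i)).1 hc
  · obtain ⟨c, rfl⟩ := (Submodule.mem_span_range_iff_exists_fun R).mp hspan
    by_cases hc : c = 0
    · subst hc
      simp only [Pi.zero_apply, zero_smul, sum_const_zero] at hd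
      exact hS hd
    · exact (h c hc).2 hd

theorem forall_fin_snoc {α : Type*} {n : ℕ} {P : (Fin (n + 1) → α) → Prop} :
    (∀ x, P x) ↔ ∀ a v, P (Fin.snoc v a) :=
  ⟨fun h _ _ => h _, fun h x => Fin.snoc_init_self x ▸ h _ _⟩

theorem forall_zmod_two {P : ZMod 2 → Prop} : (∀ a, P a) ↔ P 0 ∧ P 1 :=
  ⟨fun h => ⟨h 0, h 1⟩, fun h a => by fin_cases a; exacts [h.1, h.2]⟩

section Binary

variable {n : ℕ}

theorem four_nsmul_deck (x : Deck n) : 4 • x = 0 := by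
  funext i
  simp only [Pi.smul_apply, Pi.zero_apply]
  generalize x i = a
  revert a
  decide

theorem deck_sub_eq_add (x y : Deck n) : x - y = x + y := by
  funext i
  simp only [Pi.sub_apply, Pi.add_apply]
  generalize x i = a
  generalize y i = b
  revert a b
  decide

theorem numToCard_xor (a b : ℕ) : numToCard n (a ^^^ b) = numToCard n a + numToCard n b := by
  funext i
  simp only [numToCard, Nat.testBit_xor, Pi.add_apply]
  cases a.testBit i <;> cases b.testBit i <;> decide

theorem numToCard_mod_two_pow (a : ℕ) : numToCard n (a % 2 ^ n) = numToCard n a := by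
  funext i
  simp [numToCard, Nat.testBit_mod_two_pow, i.isLt]

theorem numToCard_injOn : Set.InjOn (numToCard n) (Set.Iio (2 ^ n)) := by
  intro a ha b hb h
  refine Nat.eq_of_testBit_eq fun i => ?_
  rcases lt_or_ge i n with hi | hi
  · have := congrFun h ⟨i, hi⟩
    simp only [numToCard] at this
    revert this
    cases a.testBit i <;> cases b.testBit i <;> decide
  · have hn : 2 ^ n ≤ 2 ^ i := Nat.pow_le_pow_right two_pos hi
    rw [Nat.testBit_lt_two_pow (lt_of_lt_of_le ha hn), Nat.testBit_lt_two_pow (lt_of_lt_of_le hb hn)]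

noncomputable def numToCardEquiv (n : ℕ) : Fin (2 ^ n) ≃ Deck n :=
  Equiv.ofBijective (fun a => numToCard n a) <| (Fintype.bijective_iff_injective_and_card _).mpr
    ⟨fun a b h => Fin.ext (numToCard_injOn a.isLt b.isLt h), by simp⟩

theorem numToCardEquiv_apply (a : Fin (2 ^ n)) : numToCardEquiv n a = numToCard n a := rfl

theorem numToCardEquiv_zero : numToCardEquiv n 0 = 0 := by
  funext i
  simp [numToCardEquiv_apply, numToCard]

theorem numToCardEquiv_symm_zero : (numToCardEquiv n).symm 0 = 0 := by
  rw [Equiv.symm_apply_eq, numToCardEquiv_zero]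

theorem numToCardEquiv_xor (a b : Fin (2 ^ n)) :
    numToCardEquiv n (a ^^^ b) = numToCardEquiv n a + numToCardEquiv n b := by
  simp only [numToCardEquiv_apply, Fin.xor_val, numToCard_mod_two_pow, numToCard_xor]

theorem numToCardEquiv_symm_add (x y : Deck n) :
    (numToCardEquiv n).symm (x + y) = (numToCardEquiv n).symm x ^^^ (numToCardEquiv n).symm y := by
  rw [Equiv.symm_apply_eq, numToCardEquiv_xor, Equiv.apply_symm_apply, Equiv.apply_symm_apply]

end Binary

section Parametrization

/-- A magic square of the 128-card deck, its cards written as integers: the pivot cells carry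
`1, 2, 4, …, 64`, the corner carries `0`, and the other eight entries are forced by the line sums. -/
def genericTable (p : Fin 4 × Fin 4) : Fin (2 ^ 7) :=
  ![![0, 86, 31, 73], ![126, 68, 59, 1], ![14, 2, 4, 8], ![112, 16, 32, 64]] p.1 p.2

noncomputable def genericSquare (p : Fin 4 × Fin 4) : Deck 7 := numToCardEquiv 7 (genericTable p)

def pivot : Fin 7 → Fin 4 × Fin 4 := ![(1, 3), (2, 1), (2, 2), (2, 3), (3, 1), (3, 2), (3, 3)]

theorem isMagic_genericSquare : IsMagic genericSquare := by
  unfold IsMagic IsSemimagic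
  decide

theorem genericSquare_zero : genericSquare (0, 0) = 0 := by decide

theorem genericSquare_pivot : ∀ k, genericSquare (pivot k) = Pi.single k 1 := by decide

variable {n : ℕ}

theorem IsMagic.affine_comp {m : ℕ} {M : Fin 4 × Fin 4 → Deck m} (hM : IsMagic M) (c : Deck n)
    (f : Deck m →ₗ[ZMod 2] Deck n) : IsMagic fun p => c + f (M p) := by
  obtain ⟨⟨hrow, hcol⟩, hdiag, hanti⟩ := hM
  have line : ∀ ℓ : Fin 4 → Fin 4 × Fin 4, ∑ i, M (ℓ i) = 0 → ∑ i, (c + f (M (ℓ i))) = 0 := by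
    intro ℓ hℓ
    rw [sum_add_distrib, ← map_sum, hℓ, map_zero, sum_const, card_univ, Fintype.card_fin,
      four_nsmul_deck, add_zero]
  exact ⟨⟨fun i => line _ (hrow i), fun j => line _ (hcol j)⟩, line _ hdiag, line _ hanti⟩

theorem IsMagic.sub {M M' : Fin 4 × Fin 4 → Deck n} (hM : IsMagic M) (hM' : IsMagic M') :
    IsMagic (M - M') := by
  obtain ⟨⟨hrow, hcol⟩, hdiag, hanti⟩ := hM
  obtain ⟨⟨hrow', hcol'⟩, hdiag', hanti'⟩ := hM'
  refine ⟨⟨fun i => ?_, fun j => ?_⟩, ?_, ?_⟩ <;> simp [sum_sub_distrib, *]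

/-- The cells `(3,0), (2,0), (0,3), (1,1), (1,0), (0,1), (0,2), (1,2)` are, in this order, the only
unknown cell of row 3, row 2, column 3, the diagonal, column 0, column 1, row 0, column 2. -/
theorem eq_zero_of_isMagic {M : Fin 4 × Fin 4 → Deck n} (hM : IsMagic M) (h₀ : M (0, 0) = 0)
    (hpivot : ∀ k, M (pivot k) = 0) : M = 0 := by
  obtain ⟨⟨hrow, hcol⟩, hdiag, -⟩ := hM
  have := hpivot 0; have := hpivot 1; have := hpivot 2; have := hpivot 3
  have := hpivot 4; have := hpivot 5; have := hpivot 6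
  have := hrow 0; have := hrow 1; have := hrow 2; have := hrow 3
  have := hcol 0; have := hcol 1; have := hcol 2; have := hcol 3
  clear hpivot hrow hcol
  simp only [pivot, Fin.sum_univ_four] at *
  funext ⟨i, j⟩
  fin_cases i <;> fin_cases j <;> simp_all

noncomputable def linearPart (M : Fin 4 × Fin 4 → Deck n) : Deck 7 →ₗ[ZMod 2] Deck n :=
  (Pi.basisFun (ZMod 2) (Fin 7)).constr (ZMod 2) fun k => M (pivot k) - M (0, 0)

theorem linearPart_single (M : Fin 4 × Fin 4 → Deck n) (k : Fin 7) :
    linearPart M (Pi.single k 1) = M (pivot k) - M (0, 0) := by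
  rw [linearPart, ← Pi.basisFun_apply, Module.Basis.constr_basis]

theorem eq_affine_of_isMagic {M : Fin 4 × Fin 4 → Deck n} (hM : IsMagic M) :
    M = fun p => M (0, 0) + linearPart M (genericSquare p) := by
  refine sub_eq_zero.mp (eq_zero_of_isMagic (hM.sub (isMagic_genericSquare.affine_comp _ _)) ?_ ?_)
  · simp [genericSquare_zero]
  · intro k
    simp [genericSquare_pivot, linearPart_single]

theorem linearPart_affine (c : Deck n) (f : Deck 7 →ₗ[ZMod 2] Deck n) :
    linearPart (fun p => c + f (genericSquare p)) = f :=
  (Pi.basisFun (ZMod 2) (Fin 7)).ext fun k => by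
    simp [linearPart, genericSquare_pivot, genericSquare_zero]

noncomputable def genericDiffs : Finset (Deck 7) :=
  univ.offDiag.image fun pq => genericSquare pq.1 - genericSquare pq.2

def AvoidsDiffs (K : Submodule (ZMod 2) (Deck 7)) : Prop := ∀ d ∈ genericDiffs, d ∉ K

theorem injective_affine_iff (c : Deck n) (f : Deck 7 →ₗ[ZMod 2] Deck n) :
    Function.Injective (fun p => c + f (genericSquare p)) ↔ AvoidsDiffs (LinearMap.ker f) := by
  constructor
  · intro h d hd hf
    obtain ⟨⟨p, q⟩, hpq, rfl⟩ := mem_image.mp hd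
    rw [LinearMap.mem_ker, map_sub, sub_eq_zero] at hf
    exact (mem_offDiag.mp hpq).2.2 (h (congrArg (c + ·) hf))
  · intro h p q hpq
    by_contra hne
    refine h _ (mem_image_of_mem _ (mem_offDiag.mpr ⟨mem_univ p, mem_univ q, hne⟩ : (p, q) ∈ _)) ?_
    rw [LinearMap.mem_ker, map_sub, sub_eq_zero]
    exact add_left_cancel hpq

noncomputable def injectiveMagicEquiv :
    {M : Fin 4 × Fin 4 → Deck n // Function.Injective M ∧ IsMagic M} ≃
      Deck n × {f : Deck 7 →ₗ[ZMod 2] Deck n // AvoidsDiffs (LinearMap.ker f)} where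
  toFun M := (M.1 (0, 0), ⟨linearPart M.1,
    (injective_affine_iff _ _).mp (eq_affine_of_isMagic M.2.2 ▸ M.2.1)⟩)
  invFun cf := ⟨fun p => cf.1 + cf.2.1 (genericSquare p), (injective_affine_iff _ _).mpr cf.2.2,
    isMagic_genericSquare.affine_comp _ _⟩
  left_inv M := Subtype.ext (eq_affine_of_isMagic M.2.2).symm
  right_inv cf := Prod.ext (by simp [genericSquare_zero]) (Subtype.ext (linearPart_affine _ _))

theorem card_injective_isMagic :
    Nat.card {M : Fin 4 × Fin 4 → Deck n // Function.Injective M ∧ IsMagic M} =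
      2 ^ n * Nat.card {f : Deck 7 →ₗ[ZMod 2] Deck n // AvoidsDiffs (LinearMap.ker f)} := by
  rw [Nat.card_congr injectiveMagicEquiv, Nat.card_prod]
  simp

end Parametrization

section Kernels

open Module

local notation "code" => Equiv.symm (numToCardEquiv 7)

def diffCodes : Finset (Fin (2 ^ 7)) :=
  univ.offDiag.image fun pq => genericTable pq.1 ^^^ genericTable pq.2

theorem mem_genericDiffs {x : Deck 7} : x ∈ genericDiffs ↔ code x ∈ diffCodes := by
  have : genericDiffs = diffCodes.map (numToCardEquiv 7).toEmbedding := by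
    simp only [genericDiffs, diffCodes, map_eq_image, image_image, Function.comp_def,
      genericSquare, Equiv.coe_toEmbedding, numToCardEquiv_xor, deck_sub_eq_add]
  rw [this, mem_map_equiv]

theorem zero_notMem_genericDiffs : 0 ∉ genericDiffs := by
  rw [mem_genericDiffs, numToCardEquiv_symm_zero]
  decide +kernel

/-- `IsFreeCode` tests membership through this bitmask rather than through `diffCodes`, so that
the kernel evaluates it in constant time in the `decide` computations below. -/
def freeMask : ℕ := ∑ a ∈ univ.filter (fun a : Fin (2 ^ 7) => a ≠ 0 ∧ a ∉ diffCodes), 2 ^ (a : ℕ)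

def IsFreeCode (a : Fin (2 ^ 7)) : Prop := freeMask.testBit a = true

instance : DecidablePred IsFreeCode := fun _ => inferInstanceAs (Decidable (_ = true))

theorem isFreeCode_iff {a : Fin (2 ^ 7)} : IsFreeCode a ↔ a ≠ 0 ∧ a ∉ diffCodes := by
  have : freeMask = ∑ i ∈ (univ.filter fun a : Fin (2 ^ 7) => a ≠ 0 ∧ a ∉ diffCodes).map
      Fin.valEmbedding, 2 ^ i := by
    rw [sum_map]
    rfl
  rw [IsFreeCode, ← Nat.mem_bitIndices, ← List.mem_toFinset, this,
    Finset.toFinset_bitIndices_sum_two_pow]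
  simp [Fin.val_inj]

theorem isFreeCode_code_iff {x : Deck 7} : IsFreeCode (code x) ↔ x ≠ 0 ∧ x ∉ genericDiffs := by
  rw [isFreeCode_iff, mem_genericDiffs, ne_eq, Equiv.symm_apply_eq, numToCardEquiv_zero]

def freeCodes : Finset (Fin (2 ^ 7)) := univ.filter IsFreeCode

def freePairs : Finset (Fin (2 ^ 7) × Fin (2 ^ 7)) :=
  (freeCodes ×ˢ freeCodes).filter fun p => IsFreeCode (p.1 ^^^ p.2)

def freeTriples : Finset ((Fin (2 ^ 7) × Fin (2 ^ 7)) × Fin (2 ^ 7)) :=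
  (freePairs ×ˢ freeCodes).filter fun t =>
    IsFreeCode (t.1.1 ^^^ t.2) ∧ IsFreeCode (t.1.2 ^^^ t.2) ∧ IsFreeCode (t.1.1 ^^^ t.1.2 ^^^ t.2)

theorem card_freeCodes : freeCodes.card = 43 := by decide +kernel

theorem card_freePairs : freePairs.card = 510 := by decide +kernel

theorem card_freeTriples : freeTriples.card = 1680 := by decide +kernel

theorem linearIndependent_and_avoidsDiffs_iff {ι : Type*} [Fintype ι] (w : ι → Deck 7) :
    (LinearIndependent (ZMod 2) w ∧ AvoidsDiffs (Submodule.span (ZMod 2) (Set.range w))) ↔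
      ∀ c : ι → ZMod 2, c ≠ 0 → IsFreeCode (code (∑ i, c i • w i)) := by
  simp only [isFreeCode_code_iff]
  exact linearIndependent_and_notMem_span_iff zero_notMem_genericDiffs w

theorem card_linearIndependent_avoidsDiffs_one :
    Nat.card {w : Fin 1 → Deck 7 //
      LinearIndependent (ZMod 2) w ∧ AvoidsDiffs (Submodule.span (ZMod 2) (Set.range w))} =
    freeCodes.card := by
  rw [← Nat.card_eq_finsetCard]
  refine Nat.card_congr (Equiv.subtypeEquiv ((Equiv.funUnique (Fin 1) (Deck 7)).trans
    (numToCardEquiv 7).symm) fun w => ?_)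
  simp only [linearIndependent_and_avoidsDiffs_iff, forall_fin_snoc, forall_zmod_two,
    Fin.sum_univ_castSucc, Fin.snoc_castSucc, Fin.snoc_last]
  simp [freeCodes, -Nat.reducePow]

theorem card_linearIndependent_avoidsDiffs_two :
    Nat.card {w : Fin 2 → Deck 7 //
      LinearIndependent (ZMod 2) w ∧ AvoidsDiffs (Submodule.span (ZMod 2) (Set.range w))} =
    freePairs.card := by
  rw [← Nat.card_eq_finsetCard]
  refine Nat.card_congr (Equiv.subtypeEquiv ((finTwoArrowEquiv (Deck 7)).trans
    ((numToCardEquiv 7).symm.prodCongr (numToCardEquiv 7).symm)) fun w => ?_)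
  simp only [linearIndependent_and_avoidsDiffs_iff, forall_fin_snoc, forall_zmod_two,
    Fin.sum_univ_castSucc, Fin.snoc_castSucc, Fin.snoc_last]
  simp [freePairs, freeCodes, numToCardEquiv_symm_add, numToCardEquiv_symm_zero, and_assoc,
    -Nat.reducePow]

theorem card_linearIndependent_avoidsDiffs_three :
    Nat.card {w : Fin 3 → Deck 7 //
      LinearIndependent (ZMod 2) w ∧ AvoidsDiffs (Submodule.span (ZMod 2) (Set.range w))} =
    freeTriples.card := by
  rw [← Nat.card_eq_finsetCard]
  let E : (Fin 3 → Deck 7) ≃ (Fin (2 ^ 7) × Fin (2 ^ 7)) × Fin (2 ^ 7) :=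
    { toFun := fun w => ((code (w 0), code (w 1)), code (w 2))
      invFun := fun t => ![numToCardEquiv 7 t.1.1, numToCardEquiv 7 t.1.2, numToCardEquiv 7 t.2]
      left_inv := fun w => by ext i : 1; fin_cases i <;> simp
      right_inv := fun t => by simp }
  refine Nat.card_congr (Equiv.subtypeEquiv E fun w => ?_)
  simp only [linearIndependent_and_avoidsDiffs_iff, forall_fin_snoc, forall_zmod_two,
    Fin.sum_univ_castSucc, Fin.snoc_castSucc, Fin.snoc_last]
  simp [E, freeTriples, freePairs, freeCodes, numToCardEquiv_symm_add, numToCardEquiv_symm_zero,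
    and_assoc, -Nat.reducePow]

/-- The translates `genericSquare p + K` are pairwise disjoint, so `16 * |K| ≤ 128`. -/
theorem finrank_le_three_of_avoidsDiffs {K : Submodule (ZMod 2) (Deck 7)} (hK : AvoidsDiffs K) :
    finrank (ZMod 2) K ≤ 3 := by
  have hinj : Function.Injective fun pk : (Fin 4 × Fin 4) × K => genericSquare pk.1 + pk.2 := by
    rintro ⟨p, k⟩ ⟨q, k'⟩ h
    have hpq : genericSquare p - genericSquare q = k' - k := by
      simp only at h
      rw [sub_eq_sub_iff_add_eq_add, h, add_comm]
    by_cases hp : p = q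
    · subst hp
      simp_all
    · exact absurd (hpq ▸ sub_mem k'.2 k.2)
        (hK _ (mem_image_of_mem _ (mem_offDiag.mpr ⟨mem_univ p, mem_univ q, hp⟩ : (p, q) ∈ _)))
  have hcard := Nat.card_le_card_of_injective _ hinj
  rw [Nat.card_prod, Nat.card_prod, Nat.card_fin, natCard_eq_pow_finrank (K := ZMod 2) (V := K),
    natCard_eq_pow_finrank (K := ZMod 2) (V := Deck 7), Nat.card_zmod, finrank_fin_fun] at hcard
  have : 2 ^ finrank (ZMod 2) K < 2 ^ 4 := by omega
  exact Nat.lt_succ_iff.mp ((Nat.pow_lt_pow_iff_right (by norm_num)).mp this)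

noncomputable def avoidingCount (j : ℕ) : ℕ :=
  Nat.card {K : Submodule (ZMod 2) (Deck 7) // finrank (ZMod 2) K = j ∧ AvoidsDiffs K}

theorem avoidingCount_mul_card_GL (j : ℕ) :
    avoidingCount j * ∏ i ∈ range j, (2 ^ j - 2 ^ i) =
      Nat.card {w : Fin j → Deck 7 //
        LinearIndependent (ZMod 2) w ∧ AvoidsDiffs (Submodule.span (ZMod 2) (Set.range w))} := by
  rw [avoidingCount, card_linearIndependent_pred_span, ZMod.card]

theorem avoidingCount_zero : avoidingCount 0 = 1 :=
  Nat.card_eq_one_iff_exists.mpr ⟨⟨⊥, finrank_bot _ _, fun _ hd hd0 =>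
    zero_notMem_genericDiffs ((Submodule.mem_bot _).mp hd0 ▸ hd)⟩,
    fun K => Subtype.ext (Submodule.finrank_eq_zero.mp K.2.1)⟩

theorem avoidingCount_one : avoidingCount 1 = 43 := by
  have h := avoidingCount_mul_card_GL 1
  rw [card_linearIndependent_avoidsDiffs_one, card_freeCodes,
    show ∏ i ∈ range 1, (2 ^ 1 - 2 ^ i) = 1 by decide] at h
  omega

theorem avoidingCount_two : avoidingCount 2 = 85 := by
  have h := avoidingCount_mul_card_GL 2
  rw [card_linearIndependent_avoidsDiffs_two, card_freePairs,
    show ∏ i ∈ range 2, (2 ^ 2 - 2 ^ i) = 6 by decide] at h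
  omega

theorem avoidingCount_three : avoidingCount 3 = 10 := by
  have h := avoidingCount_mul_card_GL 3
  rw [card_linearIndependent_avoidsDiffs_three, card_freeTriples,
    show ∏ i ∈ range 3, (2 ^ 3 - 2 ^ i) = 168 by decide] at h
  omega

theorem avoidingCount_eq_zero {j : ℕ} (hj : 3 < j) : avoidingCount j = 0 := by
  have : IsEmpty {K : Submodule (ZMod 2) (Deck 7) // finrank (ZMod 2) K = j ∧ AvoidsDiffs K} :=
    ⟨fun K => by have := finrank_le_three_of_avoidsDiffs K.2.2; omega⟩
  exact Nat.card_of_isEmpty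

end Kernels

theorem card_linearMap_avoidsDiffs (n : ℕ) :
    Nat.card {f : Deck 7 →ₗ[ZMod 2] Deck n // AvoidsDiffs (LinearMap.ker f)} =
      ∏ i ∈ range 7, (2 ^ n - 2 ^ i) + 43 * ∏ i ∈ range 6, (2 ^ n - 2 ^ i) +
        85 * ∏ i ∈ range 5, (2 ^ n - 2 ^ i) + 10 * ∏ i ∈ range 4, (2 ^ n - 2 ^ i) := by
  rw [card_linearMap_pred_ker, Module.finrank_fin_fun, Module.finrank_fin_fun, ZMod.card]
  change ∑ j ∈ range 8, avoidingCount j * _ = _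
  simp [sum_range_succ, avoidingCount_zero, avoidingCount_one, avoidingCount_two,
    avoidingCount_three, avoidingCount_eq_zero]

/-- Truncated subtraction is harmless here: for `k > n` both products contain the factor
`2 ^ n - 2 ^ n = 0`. -/
theorem natCast_prod_two_pow_sub (n k : ℕ) :
    ((∏ i ∈ range k, (2 ^ n - 2 ^ i) : ℕ) : ℤ) = ∏ i ∈ range k, ((2 : ℤ) ^ n - 2 ^ i) := by
  rcases le_or_gt k n with hk | hk
  · rw [Nat.cast_prod]
    refine prod_congr rfl fun i hi => ?_
    rw [Nat.cast_sub (Nat.pow_le_pow_right two_pos (by simp at hi; omega))]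
    push_cast
    rfl
  · rw [prod_eq_zero (mem_range.mpr hk) (Nat.sub_self (2 ^ n)),
      prod_eq_zero (mem_range.mpr hk) (sub_self ((2 : ℤ) ^ n)), Nat.cast_zero]

theorem magic_count_general (n : ℕ) :
    (Nat.card {M : Fin 4 × Fin 4 → Deck n // Function.Injective M ∧ IsMagic M} : ℤ) =
      2 ^ n * (2 ^ n - 1) * (2 ^ n - 2) * (2 ^ n - 4) * (2 ^ n - 8) *
        (10 + 85 * (2 ^ n - 16) + 43 * (2 ^ n - 16) * (2 ^ n - 32) +
          (2 ^ n - 16) * (2 ^ n - 32) * (2 ^ n - 64)) := by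
  rw [card_injective_isMagic, card_linearMap_avoidsDiffs]
  simp only [Nat.cast_mul, Nat.cast_add, Nat.cast_pow, Nat.cast_ofNat, natCast_prod_two_pow_sub]
  simp only [prod_range_succ, prod_range_zero]
  ring

theorem magic_count (n : ℕ) (hn : 4 ≤ n) :
    (Nat.card {M : Fin 4 × Fin 4 → Deck n // Function.Injective M ∧ IsMagic M} : ℤ) =
      2 ^ n * (2 ^ n - 1) * (2 ^ n - 2) * (2 ^ n - 4) * (2 ^ n - 8) *
        (10 + 85 * (2 ^ n - 16) + 43 * (2 ^ n - 16) * (2 ^ n - 32) +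
          (2 ^ n - 16) * (2 ^ n - 32) * (2 ^ n - 64)) :=
  magic_count_general n
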